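/- arXiv:1205.1907 — 2 statements merged into one kernel-verified Lean document; each statement's English description precedes it below -/
import Mathlib

section
/- Let A be an N×N matrix over ℕ. Define S_A as the set of formal power series G(λ) = Σ_{t≥0} g(t) λ^t with real N×N matrix coefficients such that (A^t)_{ij} = 0 implies g(t)_{ij} = 0 for all t, i, j. Then S_A is closed under multiplication of formal power series: if G₁, G₂ ∈ S_A then G₁·G₂ ∈ S_A. -/
open Matrix Finset

/-- Membership of a formal matrix power series (given by its coefficient
sequence `g`) in the sparsity class `S_A`. -/
def MemSA {N : ℕ} (A : Matrix (Fin N) (Fin N) ℕ)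
    (g : ℕ → Matrix (Fin N) (Fin N) ℝ) : Prop :=
  ∀ t i j, (A ^ t) i j = 0 → g t i j = 0

/-- Cauchy product of two formal matrix power series. -/
def seriesMul {N : ℕ} (g₁ g₂ : ℕ → Matrix (Fin N) (Fin N) ℝ) :
    ℕ → Matrix (Fin N) (Fin N) ℝ :=
  fun t => ∑ s ∈ Finset.range (t + 1), g₁ s * g₂ (t - s)

/- Over a canonically ordered semiring without zero divisors, an entry of `A * B` vanishes only
if every term `A i k * B k j` does. -/
theorem Matrix.mul_apply_eq_zero_of_zero_pattern {ι κ μ S R : Type*} [Fintype κ]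
    [NonUnitalNonAssocSemiring S] [PartialOrder S] [CanonicallyOrderedAdd S] [NoZeroDivisors S]
    [NonUnitalNonAssocSemiring R] {A : Matrix ι κ S} {B : Matrix κ μ S}
    {P : Matrix ι κ R} {Q : Matrix κ μ R}
    (hP : ∀ i k, A i k = 0 → P i k = 0) (hQ : ∀ k j, B k j = 0 → Q k j = 0)
    {i : ι} {j : μ} (h : (A * B) i j = 0) : (P * Q) i j = 0 := by
  rw [mul_apply] at h ⊢
  refine Finset.sum_eq_zero fun k hk => ?_
  rcases mul_eq_zero.mp (Finset.sum_eq_zero_iff.mp h k hk) with hA | hB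
  · rw [hP i k hA, zero_mul]
  · rw [hQ k j hB, mul_zero]

theorem stmt_2 {N : ℕ} (A : Matrix (Fin N) (Fin N) ℕ)
    (g₁ g₂ : ℕ → Matrix (Fin N) (Fin N) ℝ)
    (h₁ : MemSA A g₁) (h₂ : MemSA A g₂) :
    MemSA A (seriesMul g₁ g₂) := by
  intro t i j hA
  simp only [seriesMul, Matrix.sum_apply]
  refine Finset.sum_eq_zero fun s hs => ?_
  have hsplit : A ^ t = A ^ s * A ^ (t - s) :=
    (pow_mul_pow_sub A (Nat.lt_succ_iff.mp (mem_range.mp hs))).symm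
  exact mul_apply_eq_zero_of_zero_pattern (h₁ s) (h₂ (t - s)) (hsplit ▸ hA)
end

section
/- Let A be an N×N matrix over ℕ whose diagonal entries are all positive (so (A^t)_{ii} > 0 for all t), and let S_A be the set of formal matrix power series respecting the sparsity of powers of A. If H₁ ∈ S_A has constant term with spectral radius condition replaced by the formal requirement that I − H₁ is invertible as a formal power series (e.g., the constant term of H₁ is nilpotent or zero), then for any H₂ ∈ S_A, the product H₂ · (I − H₁)^{-1} belongs to S_A. -/
open Matrix Finset

/-- The constant power series `1` (the identity matrix). -/
def seriesOne (N : ℕ) : ℕ → Matrix (Fin N) (Fin N) ℝ :=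
  fun t => if t = 0 then 1 else 0

/-!
Expanding `(I - H₁) J = I` gives the recursion `J t = [t = 0] I + ∑_{1 ≤ s ≤ t} H₁ s * J (t - s)`,
in which `J` only appears at degrees below `t` because `H₁ 0 = 0`. Since `A` has entries in `ℕ`,
`(A ^ t) i j = 0` forces `(A ^ s) i k = 0` or `(A ^ (t - s)) k j = 0` for every `k`, so every term
of a Cauchy product of two series in `S_A` vanishes at `(t, i, j)`. By strong induction on the
degree `J ∈ S_A`, and then `H₂ J ∈ S_A`.
-/

namespace Matrix

variable {n R : Type*} [Fintype n] [Semiring R] [PartialOrder R] [CanonicallyOrderedAdd R]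
  [NoZeroDivisors R]

theorem eq_zero_or_eq_zero_of_mul_apply_eq_zero {M M' : Matrix n n R} {i j : n}
    (h : (M * M') i j = 0) (k : n) : M i k = 0 ∨ M' k j = 0 :=
  mul_eq_zero.mp (Finset.sum_eq_zero_iff.mp h k (Finset.mem_univ k))

theorem eq_zero_or_eq_zero_of_pow_apply_eq_zero [DecidableEq n] {M : Matrix n n R} {s t : ℕ}
    (hst : s ≤ t) {i j : n} (h : (M ^ t) i j = 0) (k : n) :
    (M ^ s) i k = 0 ∨ (M ^ (t - s)) k j = 0 := by
  rw [← pow_mul_pow_sub M hst] at h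
  exact eq_zero_or_eq_zero_of_mul_apply_eq_zero h k

end Matrix

section SparsityClass

variable {N : ℕ} (A : Matrix (Fin N) (Fin N) ℕ)

theorem mul_apply_eq_zero_of_pow_apply_eq_zero {X Y : Matrix (Fin N) (Fin N) ℝ} {s t : ℕ}
    (hst : s ≤ t) {i j : Fin N} (hA : (A ^ t) i j = 0)
    (hX : ∀ k, (A ^ s) i k = 0 → X i k = 0) (hY : ∀ k, (A ^ (t - s)) k j = 0 → Y k j = 0) :
    (X * Y) i j = 0 := by
  rw [Matrix.mul_apply]
  refine Finset.sum_eq_zero fun k _ => ?_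
  rcases Matrix.eq_zero_or_eq_zero_of_pow_apply_eq_zero hst hA k with hk | hk
  · rw [hX k hk, zero_mul]
  · rw [hY k hk, mul_zero]

theorem memSA_seriesMul {g₁ g₂ : ℕ → Matrix (Fin N) (Fin N) ℝ} (h₁ : MemSA A g₁)
    (h₂ : MemSA A g₂) : MemSA A (seriesMul g₁ g₂) := by
  intro t i j hA
  rw [seriesMul, Matrix.sum_apply]
  refine Finset.sum_eq_zero fun s hs => ?_
  exact mul_apply_eq_zero_of_pow_apply_eq_zero A (Finset.mem_range_succ_iff.mp hs) hA
    (h₁ s i) (fun k => h₂ (t - s) k j)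

theorem memSA_seriesOne : MemSA A (seriesOne N) := by
  rintro (_ | t) i j hA
  · have hij : i ≠ j := by rintro rfl; simp at hA
    simp [seriesOne, Matrix.one_apply_ne hij]
  · simp [seriesOne]

theorem seriesMul_seriesOne_left (g : ℕ → Matrix (Fin N) (Fin N) ℝ) :
    seriesMul (seriesOne N) g = g := by
  funext t
  rw [seriesMul, Finset.sum_eq_single 0 (fun s _ hs => by simp [seriesOne, hs]) (by simp)]
  simp [seriesOne]

theorem seriesMul_one_sub_left (H g : ℕ → Matrix (Fin N) (Fin N) ℝ) :
    seriesMul (fun t => seriesOne N t - H t) g = fun t => g t - seriesMul H g t := by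
  funext t
  have hg := congrFun (seriesMul_seriesOne_left g) t
  simp only [seriesMul, sub_mul, Finset.sum_sub_distrib] at hg ⊢
  rw [hg]

theorem memSA_of_seriesMul_one_sub_eq_seriesOne {H J : ℕ → Matrix (Fin N) (Fin N) ℝ}
    (hH : MemSA A H) (hH₀ : H 0 = 0)
    (hJ : seriesMul (fun t => seriesOne N t - H t) J = seriesOne N) : MemSA A J := by
  have hrec : ∀ t, J t = seriesOne N t + seriesMul H J t := fun t => by
    rw [← congrFun hJ t, seriesMul_one_sub_left, sub_add_cancel]
  intro t
  induction t using Nat.strong_induction_on with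
  | _ t ih =>
  intro i j hA
  rw [hrec, Matrix.add_apply, memSA_seriesOne A t i j hA, zero_add, seriesMul,
    Finset.sum_range_succ', hH₀, zero_mul, add_zero, Matrix.sum_apply]
  refine Finset.sum_eq_zero fun s hs => ?_
  have hst : s + 1 ≤ t := Finset.mem_range.mp hs
  exact mul_apply_eq_zero_of_pow_apply_eq_zero A hst hA (hH (s + 1) i)
    (fun k => ih (t - (s + 1)) (by omega) k j)

end SparsityClass

theorem stmt_3_general {N : ℕ} (A : Matrix (Fin N) (Fin N) ℕ)
    (H₁ H₂ : ℕ → Matrix (Fin N) (Fin N) ℝ)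
    (h₁ : MemSA A H₁) (h₂ : MemSA A H₂)
    (hconst : H₁ 0 = 0)
    (J : ℕ → Matrix (Fin N) (Fin N) ℝ)
    (hJr : seriesMul (fun t => seriesOne N t - H₁ t) J = seriesOne N) :
    MemSA A (seriesMul H₂ J) :=
  memSA_seriesMul A h₂ (memSA_of_seriesMul_one_sub_eq_seriesOne A h₁ hconst hJr)

theorem stmt_3 {N : ℕ} (A : Matrix (Fin N) (Fin N) ℕ)
    (hdiag : ∀ i, 0 < A i i)
    (H₁ H₂ : ℕ → Matrix (Fin N) (Fin N) ℝ)
    (h₁ : MemSA A H₁) (h₂ : MemSA A H₂)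
    (hconst : H₁ 0 = 0)
    (J : ℕ → Matrix (Fin N) (Fin N) ℝ)
    (hJr : seriesMul (fun t => seriesOne N t - H₁ t) J = seriesOne N)
    (hJl : seriesMul J (fun t => seriesOne N t - H₁ t) = seriesOne N) :
    MemSA A (seriesMul H₂ J) :=
  stmt_3_general A H₁ H₂ h₁ h₂ hconst J hJr
end
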